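/- If n or m is even and n, m ≥ 3, then the direct product Kₙ × K_m has total chromatic number (n−1)(m−1) + 1. -/

import Mathlib

open SimpleGraph

variable {V : Type*} {W : Type*}

/-- The direct (tensor) product of two simple graphs. -/
def tensorProd (G : SimpleGraph V) (H : SimpleGraph W) : SimpleGraph (V × W) where
  Adj a b := G.Adj a.1 b.1 ∧ H.Adj a.2 b.2
  symm := ⟨fun _ _ h => ⟨h.1.symm, h.2.symm⟩⟩
  loopless := ⟨fun _ h => h.1.ne rfl⟩

instance tensorProd.adjDecidable (G : SimpleGraph V) (H : SimpleGraph W)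
    [DecidableRel G.Adj] [DecidableRel H.Adj] : DecidableRel (tensorProd G H).Adj :=
  fun _ _ => instDecidableAnd

/-- A proper edge colouring with `n` colours, given as a symmetric function on adjacent pairs. -/
def IsEdgeColoring (G : SimpleGraph V) (n : ℕ) (ce : V → V → Fin n) : Prop :=
  (∀ u v, G.Adj u v → ce u v = ce v u) ∧
  (∀ u v w, G.Adj u v → G.Adj u w → v ≠ w → ce u v ≠ ce u w)

/-- A proper total colouring with `n` colours. -/
def IsTotalColoring (G : SimpleGraph V) (n : ℕ) (cv : V → Fin n) (ce : V → V → Fin n) : Prop :=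
  (∀ u v, G.Adj u v → ce u v = ce v u) ∧
  (∀ u v, G.Adj u v → cv u ≠ cv v) ∧
  (∀ u v w, G.Adj u v → G.Adj u w → v ≠ w → ce u v ≠ ce u w) ∧
  (∀ u v, G.Adj u v → ce u v ≠ cv u ∧ ce u v ≠ cv v)

/-- The total chromatic number of a graph. -/
noncomputable def totalChromaticNumber (G : SimpleGraph V) : ℕ :=
  sInf {n | ∃ cv ce, IsTotalColoring G n cv ce}

/-- Adjacency of the crown graph. -/
def crownAdj {m : ℕ} : Fin m ⊕ Fin m → Fin m ⊕ Fin m → Prop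
  | Sum.inl k, Sum.inr t => k ≠ t
  | Sum.inr k, Sum.inl t => k ≠ t
  | _, _ => False

/-- The crown graph `J_{2m}`: `K_{m,m}` minus a perfect matching. -/
def crown (m : ℕ) : SimpleGraph (Fin m ⊕ Fin m) where
  Adj := crownAdj
  symm := by constructor; rintro (k|k) (t|t) h <;> simp only [crownAdj] at * <;> exact fun e => h e.symm
  loopless := by constructor; rintro (k|k) h <;> simp only [crownAdj] at h

instance crown.adjDecidable (m : ℕ) : DecidableRel (crown m).Adj := fun a b =>
  match a, b with
  | Sum.inl k, Sum.inr t => (inferInstance : Decidable (k ≠ t))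
  | Sum.inr k, Sum.inl t => (inferInstance : Decidable (k ≠ t))
  | Sum.inl _, Sum.inl _ => isFalse (fun h => h)
  | Sum.inr _, Sum.inr _ => isFalse (fun h => h)


/-!
Colour the vertex `(i, c)` of `Kₙ × K_m` by `i`, and colour the edges of `K_m` (`m` even) properly
with `m - 1` colours, one of them distinguished. Over each colour class of `K_m`, a perfect
matching, the edges of `Kₙ × K_m` form disjoint crowns `Kₙ × K₂`; orient each matching edge. Over
the distinguished class, the edge from `(i, c)` to `(j, t)` (with `c` before `t`) gets colour
`L i j` for an idempotent Latin square `L` of order `n` (these exist for `n ≠ 2`), which avoids the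
vertex colours `i` and `j`; over each other class it gets one of `n - 1` fresh colours, given by a
proper edge colouring of the crown. In all, `n + (m - 2)(n - 1) = (n - 1)(m - 1) + 1` colours;
no fewer suffice since every vertex has degree `(n - 1)(m - 1)`. If only `n` is even, swap the
factors.
-/

section Colourings

variable {V' C C' : Type*}

structure IsTotalColoringIn (G : SimpleGraph V) (cv : V → C) (ce : V → V → C) : Prop where
  edge_symm : ∀ u v, G.Adj u v → ce u v = ce v u
  vertex_ne : ∀ u v, G.Adj u v → cv u ≠ cv v
  edge_ne : ∀ u v w, G.Adj u v → G.Adj u w → v ≠ w → ce u v ≠ ce u w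
  edge_ne_vertex : ∀ u v, G.Adj u v → ce u v ≠ cv u ∧ ce u v ≠ cv v

structure IsEdgeColoringIn (G : SimpleGraph V) (ce : V → V → C) : Prop where
  edge_symm : ∀ u v, G.Adj u v → ce u v = ce v u
  edge_ne : ∀ u v w, G.Adj u v → G.Adj u w → v ≠ w → ce u v ≠ ce u w

theorem isTotalColoring_iff {G : SimpleGraph V} {n : ℕ} {cv : V → Fin n} {ce : V → V → Fin n} :
    IsTotalColoring G n cv ce ↔ IsTotalColoringIn G cv ce :=
  ⟨fun ⟨h₁, h₂, h₃, h₄⟩ => ⟨h₁, h₂, h₃, h₄⟩, fun ⟨h₁, h₂, h₃, h₄⟩ => ⟨h₁, h₂, h₃, h₄⟩⟩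

namespace IsTotalColoringIn

variable {G : SimpleGraph V} {G' : SimpleGraph V'} {cv : V → C} {ce : V → V → C}

theorem comap {cv : V' → C} {ce : V' → V' → C} (h : IsTotalColoringIn G' cv ce) (φ : G →g G')
    (hφ : Function.Injective φ) :
    IsTotalColoringIn G (fun u => cv (φ u)) (fun u v => ce (φ u) (φ v)) where
  edge_symm _ _ huv := h.edge_symm _ _ (φ.map_adj huv)
  vertex_ne _ _ huv := h.vertex_ne _ _ (φ.map_adj huv)
  edge_ne _ _ _ huv huw hvw := h.edge_ne _ _ _ (φ.map_adj huv) (φ.map_adj huw) (hφ.ne hvw)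
  edge_ne_vertex _ _ huv := h.edge_ne_vertex _ _ (φ.map_adj huv)

theorem map (h : IsTotalColoringIn G cv ce) {f : C → C'} (hf : Function.Injective f) :
    IsTotalColoringIn G (fun u => f (cv u)) (fun u v => f (ce u v)) where
  edge_symm _ _ huv := congrArg f (h.edge_symm _ _ huv)
  vertex_ne _ _ huv := hf.ne (h.vertex_ne _ _ huv)
  edge_ne _ _ _ huv huw hvw := hf.ne (h.edge_ne _ _ _ huv huw hvw)
  edge_ne_vertex _ _ huv :=
    ⟨hf.ne (h.edge_ne_vertex _ _ huv).1, hf.ne (h.edge_ne_vertex _ _ huv).2⟩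

theorem exists_isTotalColoring [Fintype C] (h : IsTotalColoringIn G cv ce) :
    ∃ cv ce, IsTotalColoring G (Fintype.card C) cv ce :=
  ⟨_, _, isTotalColoring_iff.2 (h.map (Fintype.equivFin C).injective)⟩

theorem card_add_one_le [Fintype C] [DecidableEq C] (h : IsTotalColoringIn G cv ce) {u : V}
    {s : Finset V} (hs : ∀ v ∈ s, G.Adj u v) : s.card + 1 ≤ Fintype.card C := by
  have hinj : Set.InjOn (ce u) s := fun v hv w hw hvw =>
    of_not_not fun hne => h.edge_ne u v w (hs v hv) (hs w hw) hne hvw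
  have hfresh : cv u ∉ s.image (ce u) := by
    simp only [Finset.mem_image, not_exists, not_and]
    exact fun v hv => (h.edge_ne_vertex u v (hs v hv)).1
  calc s.card + 1 = (insert (cv u) (s.image (ce u))).card := by
        rw [Finset.card_insert_of_notMem hfresh, Finset.card_image_of_injOn hinj]
    _ ≤ Fintype.card C := Finset.card_le_univ _

end IsTotalColoringIn

namespace IsEdgeColoringIn

variable {G : SimpleGraph V} {G' : SimpleGraph V'}

theorem comap {ce : V' → V' → C} (h : IsEdgeColoringIn G' ce) (φ : G →g G')
    (hφ : Function.Injective φ) : IsEdgeColoringIn G (fun u v => ce (φ u) (φ v)) where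
  edge_symm _ _ huv := h.edge_symm _ _ (φ.map_adj huv)
  edge_ne _ _ _ huv huw hvw := h.edge_ne _ _ _ (φ.map_adj huv) (φ.map_adj huw) (hφ.ne hvw)

theorem map {ce : V → V → C} (h : IsEdgeColoringIn G ce) {f : C → C'}
    (hf : Function.Injective f) : IsEdgeColoringIn G (fun u v => f (ce u v)) where
  edge_symm _ _ huv := congrArg f (h.edge_symm _ _ huv)
  edge_ne _ _ _ huv huw hvw := hf.ne (h.edge_ne _ _ _ huv huw hvw)

end IsEdgeColoringIn

theorem totalChromaticNumber_congr {G : SimpleGraph V} {G' : SimpleGraph V'} (e : G ≃g G') :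
    totalChromaticNumber G = totalChromaticNumber G' := by
  unfold totalChromaticNumber
  congr 1
  ext N
  constructor
  · rintro ⟨cv, ce, h⟩
    exact ⟨_, _,
      isTotalColoring_iff.2 ((isTotalColoring_iff.1 h).comap e.symm.toHom e.symm.injective)⟩
  · rintro ⟨cv, ce, h⟩
    exact ⟨_, _, isTotalColoring_iff.2 ((isTotalColoring_iff.1 h).comap e.toHom e.injective)⟩

theorem totalChromaticNumber_eq_of {G : SimpleGraph V} {N : ℕ}
    (h : ∃ cv ce, IsTotalColoring G N cv ce)
    (hmin : ∀ k cv ce, IsTotalColoring G k cv ce → N ≤ k) : totalChromaticNumber G = N :=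
  le_antisymm (Nat.sInf_le h) (le_csInf ⟨N, h⟩ fun k ⟨cv, ce, hk⟩ => hmin k cv ce hk)

end Colourings

def tensorProdComm (G : SimpleGraph V) (H : SimpleGraph W) :
    tensorProd G H ≃g tensorProd H G where
  toEquiv := Equiv.prodComm V W
  map_rel_iff' := and_comm

section LatinSquares

variable {α β Δ : Type*}

/-- On a finite type, injectivity of the rows and columns is the Latin property. -/
structure IsIdempotentLatinSquare (L : α → α → α) : Prop where
  self_eq : ∀ a, L a a = a
  row_injective : ∀ a, Function.Injective (L a)
  col_injective : ∀ b, Function.Injective (L · b)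

/-- `f i j` (for `i ≠ j`) colours properly the edge from the `i`-th left vertex to the `j`-th right
vertex of the crown graph on `α ⊕ α`. -/
structure IsCrownColoring (f : α → α → Δ) : Prop where
  row_inj : ∀ {i j j'}, i ≠ j → i ≠ j' → f i j = f i j' → j = j'
  col_inj : ∀ {i i' j}, i ≠ j → i' ≠ j → f i j = f i' j → i = i'

namespace IsIdempotentLatinSquare

variable {L : α → α → α}

theorem ne_left (hL : IsIdempotentLatinSquare L) {i j : α} (hij : i ≠ j) : L i j ≠ i :=
  fun h => hij ((hL.row_injective i) (h.trans (hL.self_eq i).symm)).symm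

theorem ne_right (hL : IsIdempotentLatinSquare L) {i j : α} (hij : i ≠ j) : L i j ≠ j :=
  fun h => hij ((hL.col_injective j) (h.trans (hL.self_eq j).symm))

theorem congr (hL : IsIdempotentLatinSquare L) (e : α ≃ β) :
    IsIdempotentLatinSquare fun x y => e (L (e.symm x) (e.symm y)) where
  self_eq x := by simp [hL.self_eq]
  row_injective x := e.injective.comp ((hL.row_injective _).comp e.symm.injective)
  col_injective y := e.injective.comp ((hL.col_injective _).comp e.symm.injective)

end IsIdempotentLatinSquare

section Midpoint

variable (R : Type*) {M : Type*} [Ring R] [Invertible (2 : R)] [AddCommGroup M] [Module R M]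

theorem midpoint_right_injective (x : M) : Function.Injective (midpoint R x) := fun y y' h =>
  add_left_cancel (a := x) <| by rw [← midpoint_add_self R x y, ← midpoint_add_self R x y', h]

theorem midpoint_left_injective (y : M) : Function.Injective (midpoint R · y) := fun x x' h =>
  midpoint_right_injective R y (by simpa only [midpoint_comm _ y] using h)

theorem isIdempotentLatinSquare_midpoint : IsIdempotentLatinSquare (midpoint R : M → M → M) :=
  ⟨midpoint_self R, midpoint_right_injective R, midpoint_left_injective R⟩

theorem midpoint_sub_one_self_injective : Function.Injective fun y : R => midpoint R (y - 1) y := by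
  intro y y' h
  have hsum : y - 1 + y = y' - 1 + y' := by
    rw [← midpoint_add_self R (y - 1) y, ← midpoint_add_self R (y' - 1) y']
    exact congrArg₂ (· + ·) h h
  have h2 : (2 : R) * y = 2 * y' := by
    rw [two_mul, two_mul]
    calc y + y = y - 1 + y + 1 := by abel
      _ = y' + y' := by rw [hsum]; abel
  exact (isUnit_of_invertible (2 : R)).mul_left_cancel h2

/-- The midpoint square on `R` bordered by a new symbol `none`: the entry of each cell `(x, x + 1)`
moves into the new row and the new column, and the cell itself gets `none`. -/
def borderedMidpoint [DecidableEq R] : Option R → Option R → Option R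
  | none, none => none
  | none, some y => some (midpoint R (y - 1) y)
  | some x, none => some (midpoint R x (x + 1))
  | some x, some y => if y = x + 1 then none else some (midpoint R x y)

theorem isIdempotentLatinSquare_borderedMidpoint [DecidableEq R] [Nontrivial R] :
    IsIdempotentLatinSquare (borderedMidpoint R) where
  self_eq
    | none => rfl
    | some x => by simp [borderedMidpoint]
  row_injective := by
    rintro (_ | x) (_ | y) (_ | y') h <;> simp only [borderedMidpoint] at h <;>
      (try split_ifs at h with h₁) <;>
      simp only [reduceCtorEq, Option.some.injEq] at h ⊢
    · exact midpoint_sub_one_self_injective R h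
    · exact h₁ (midpoint_right_injective R x h).symm
    · exact h₁ (midpoint_right_injective R x h)
    · exact h₁.trans ‹y' = x + 1›.symm
    · exact midpoint_right_injective R x h
  col_injective := by
    rintro (_ | y) (_ | x) (_ | x') h <;> simp only [borderedMidpoint] at h <;>
      (try split_ifs at h with h₁) <;>
      simp only [reduceCtorEq, Option.some.injEq] at h ⊢
    · exact add_left_injective 1 (midpoint_sub_one_self_injective R (by simpa using h))
    · exact h₁ (by rw [← midpoint_left_injective R y h, sub_add_cancel])
    · exact h₁ (by rw [midpoint_left_injective R y h, sub_add_cancel])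
    · exact add_left_injective 1 (h₁.symm.trans ‹y = x' + 1›)
    · exact midpoint_left_injective R y h

end Midpoint

end LatinSquares

abbrev ZMod.invertibleTwo {q : ℕ} (hq : Odd q) : Invertible (2 : ZMod q) :=
  Nat.cast_ofNat (R := ZMod q) (n := 2) ▸ invertibleOfCoprime (Nat.coprime_two_left.2 hq)

theorem exists_isIdempotentLatinSquare_fin {n : ℕ} (hn : n ≠ 2) :
    ∃ L : Fin n → Fin n → Fin n, IsIdempotentLatinSquare L := by
  rcases Nat.even_or_odd n with hev | hodd
  · rcases Nat.eq_zero_or_pos n with rfl | hpos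
    · exact ⟨fun a _ => a, ⟨fun _ => rfl, fun a => a.elim0, fun b => b.elim0⟩⟩
    obtain ⟨q, rfl⟩ : ∃ q, n = q + 1 := ⟨n - 1, by omega⟩
    have hq : Odd q := by simpa [Nat.even_add_one] using hev
    have hq1 : 1 < q := by obtain ⟨k, rfl⟩ := hq; omega
    have : Fact (1 < q) := ⟨hq1⟩
    have : NeZero q := ⟨by omega⟩
    let := ZMod.invertibleTwo hq
    exact ⟨_, (isIdempotentLatinSquare_borderedMidpoint (ZMod q)).congr
      (Fintype.equivOfCardEq (by simp))⟩
  · have : NeZero n := ⟨hodd.pos.ne'⟩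
    let := ZMod.invertibleTwo hodd
    exact ⟨_, (isIdempotentLatinSquare_midpoint (ZMod n) (M := ZMod n)).congr
      (Fintype.equivOfCardEq (by simp))⟩

theorem exists_isCrownColoring_fin (p : ℕ) [NeZero p] :
    ∃ δ : Fin (p + 1) → Fin (p + 1) → Fin p, IsCrownColoring δ := by
  refine ⟨fun i j => Fin.predAbove 0 (j - i),
    ⟨fun {i j j'} hij hij' h => ?_, fun {i i' j} hij hi'j h => ?_⟩⟩
  · rw [Fin.predAbove_zero_of_ne_zero (sub_ne_zero.2 hij.symm),
      Fin.predAbove_zero_of_ne_zero (sub_ne_zero.2 hij'.symm), Fin.pred_inj] at h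
    exact sub_left_injective h
  · rw [Fin.predAbove_zero_of_ne_zero (sub_ne_zero.2 hij.symm),
      Fin.predAbove_zero_of_ne_zero (sub_ne_zero.2 hi'j.symm), Fin.pred_inj] at h
    exact sub_right_injective h

section OneFactorization

variable (R : Type*) [Ring R] [Invertible (2 : R)]

def optionMidpoint : Option R → Option R → R
  | some x, some y => midpoint R x y
  | some x, none => x
  | none, some y => y
  | none, none => 0

theorem isEdgeColoringIn_optionMidpoint :
    IsEdgeColoringIn (⊤ : SimpleGraph (Option R)) (optionMidpoint R) where
  edge_symm := by
    rintro (_ | x) (_ | y) _ <;> simp [optionMidpoint, midpoint_comm]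
  edge_ne := by
    rintro (_ | x) (_ | y) (_ | z) huv huw hvw h <;>
      simp_all [optionMidpoint, midpoint_eq_left_iff, left_eq_midpoint_iff,
        (midpoint_right_injective R _).eq_iff]

end OneFactorization

theorem exists_isEdgeColoringIn_top_fin {q : ℕ} (hq : Odd q) :
    ∃ ce : Fin (q + 1) → Fin (q + 1) → Fin q, IsEdgeColoringIn ⊤ ce := by
  have : NeZero q := ⟨hq.pos.ne'⟩
  let := ZMod.invertibleTwo hq
  let e : Fin (q + 1) ≃ Option (ZMod q) := Fintype.equivOfCardEq (by simp)
  let f : ZMod q ≃ Fin q := Fintype.equivOfCardEq (by simp)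
  exact ⟨_, ((isEdgeColoringIn_optionMidpoint (ZMod q)).comap (Iso.completeGraph e).toHom
    e.injective).map f.injective⟩

section TensorProduct

variable {α D Δ : Type*} {L : α → α → α} {δ : α → α → Δ}

def layerColour (L : α → α → α) (δ : α → α → Δ) (i j : α) : Option D → α ⊕ (D × Δ)
  | none => .inl (L i j)
  | some d => .inr (d, δ i j)

theorem eq_of_layerColour_eq {i j i' j' : α} {o o' : Option D}
    (h : layerColour L δ i j o = layerColour L δ i' j' o') : o = o' := by
  cases o <;> cases o' <;> simp_all [layerColour]

theorem layerColour_row_inj (hL : IsIdempotentLatinSquare L) (hδ : IsCrownColoring δ)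
    {i j j' : α} {o : Option D} (hj : i ≠ j) (hj' : i ≠ j')
    (h : layerColour L δ i j o = layerColour L δ i j' o) : j = j' := by
  cases o with
  | none => exact hL.row_injective i (Sum.inl_injective h)
  | some d => exact hδ.row_inj hj hj' (congrArg Prod.snd (Sum.inr_injective h))

theorem layerColour_col_inj (hL : IsIdempotentLatinSquare L) (hδ : IsCrownColoring δ)
    {i i' j : α} {o : Option D} (hi : i ≠ j) (hi' : i' ≠ j)
    (h : layerColour L δ i j o = layerColour L δ i' j o) : i = i' := by
  cases o with
  | none => exact hL.col_injective j (Sum.inl_injective h)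
  | some d => exact hδ.col_inj hi hi' (congrArg Prod.snd (Sum.inr_injective h))

theorem layerColour_ne_inl (hL : IsIdempotentLatinSquare L) {i j : α} (o : Option D)
    (hij : i ≠ j) : layerColour L δ i j o ≠ .inl i ∧ layerColour L δ i j o ≠ .inl j := by
  cases o with
  | none => exact ⟨fun h => hL.ne_left hij (Sum.inl_injective h),
      fun h => hL.ne_right hij (Sum.inl_injective h)⟩
  | some d => exact ⟨Sum.inr_ne_inl, Sum.inr_ne_inl⟩

variable [LinearOrder W]

def tensorProdEdgeColour (L : α → α → α) (δ : α → α → Δ) (ce : W → W → Option D)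
    (u v : α × W) : α ⊕ (D × Δ) :=
  if u.2 < v.2 then layerColour L δ u.1 v.1 (ce u.2 v.2) else layerColour L δ v.1 u.1 (ce v.2 u.2)

theorem isTotalColoringIn_tensorProd (hL : IsIdempotentLatinSquare L) (hδ : IsCrownColoring δ)
    {H : SimpleGraph W} {ce : W → W → Option D} (hce : IsEdgeColoringIn H ce) :
    IsTotalColoringIn (tensorProd ⊤ H) (fun u => .inl u.1) (tensorProdEdgeColour L δ ce) := by
  have colour_eq : ∀ u v, (tensorProd ⊤ H).Adj u v → tensorProdEdgeColour L δ ce u v =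
      if u.2 < v.2 then layerColour L δ u.1 v.1 (ce u.2 v.2)
      else layerColour L δ v.1 u.1 (ce u.2 v.2) := fun u v huv => by
    rw [tensorProdEdgeColour, hce.edge_symm v.2 u.2 huv.2.symm]
  refine ⟨fun u v huv => ?_, fun u v huv h => huv.1.ne (Sum.inl_injective h),
    fun u v w huv huw hvw h => ?_, fun u v huv => ?_⟩
  · rcases huv.2.ne.lt_or_gt with hlt | hlt <;>
      simp [tensorProdEdgeColour, hlt, hlt.not_gt]
  · rw [colour_eq u v huv, colour_eq u w huw] at h
    have hlayer : ce u.2 v.2 = ce u.2 w.2 := by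
      split_ifs at h <;> exact eq_of_layerColour_eq h
    have h2 : v.2 = w.2 := of_not_not fun hne => hce.edge_ne _ _ _ huv.2 huw.2 hne hlayer
    rw [← h2] at h
    have h1 : v.1 = w.1 := by
      split_ifs at h
      · exact layerColour_row_inj hL hδ huv.1.ne huw.1.ne h
      · exact layerColour_col_inj hL hδ huv.1.ne.symm huw.1.ne.symm h
    exact hvw (Prod.ext h1 h2)
  · rw [colour_eq u v huv]
    split_ifs
    · exact layerColour_ne_inl hL _ huv.1.ne
    · exact (layerColour_ne_inl hL _ huv.1.ne.symm).symm

end TensorProduct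

theorem exists_isTotalColoring_top_tensorProd_top {p q : ℕ} (hp : 2 ≤ p) (hq : Odd q) :
    ∃ cv ce, IsTotalColoring
      (tensorProd (⊤ : SimpleGraph (Fin (p + 1))) (⊤ : SimpleGraph (Fin (q + 1)))) (p * q + 1)
      cv ce := by
  have : NeZero p := ⟨by omega⟩
  obtain ⟨L, hL⟩ := exists_isIdempotentLatinSquare_fin (n := p + 1) (by omega)
  obtain ⟨δ, hδ⟩ := exists_isCrownColoring_fin p
  obtain ⟨ce, hce⟩ := exists_isEdgeColoringIn_top_fin hq
  obtain ⟨r, rfl⟩ : ∃ r, q = r + 1 := ⟨q - 1, by have := hq.pos; omega⟩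
  have hcard : Fintype.card (Fin (p + 1) ⊕ (Fin r × Fin p)) = p * (r + 1) + 1 := by
    simp only [Fintype.card_sum, Fintype.card_prod, Fintype.card_fin]
    ring
  rw [← hcard]
  exact (isTotalColoringIn_tensorProd hL hδ
    (hce.map (finSuccEquiv r).injective)).exists_isTotalColoring

theorem le_of_isTotalColoring_top_tensorProd_top {n m N : ℕ} {cv ce}
    (h : IsTotalColoring
      (tensorProd (⊤ : SimpleGraph (Fin (n + 1))) (⊤ : SimpleGraph (Fin (m + 1)))) N cv ce) :
    n * m + 1 ≤ N := by
  have := (isTotalColoring_iff.1 h).card_add_one_le (u := (0, 0)) (s := {0}ᶜ ×ˢ {0}ᶜ)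
    (fun v hv => by simp_all [tensorProd, eq_comm])
  simpa [Finset.card_compl] using this

theorem Kn_tensor_Km_typeI (n m : ℕ) (hn : 3 ≤ n) (hm : 3 ≤ m) (he : Even n ∨ Even m) :
    totalChromaticNumber (tensorProd (⊤ : SimpleGraph (Fin n)) (⊤ : SimpleGraph (Fin m))) =
      (n - 1) * (m - 1) + 1 := by
  wlog hme : Even m generalizing n m
  · rw [totalChromaticNumber_congr (tensorProdComm _ _),
      this m n hm hn he.symm (he.resolve_right hme), mul_comm]
  obtain ⟨p, rfl⟩ : ∃ p, n = p + 1 := ⟨n - 1, by omega⟩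
  obtain ⟨q, rfl⟩ : ∃ q, m = q + 1 := ⟨m - 1, by omega⟩
  have hq : Odd q := by simpa [Nat.even_add_one] using hme
  simp only [Nat.add_sub_cancel]
  exact totalChromaticNumber_eq_of (exists_isTotalColoring_top_tensorProd_top (by omega) hq)
    fun _ _ _ => le_of_isTotalColoring_top_tensorProd_top
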